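/- Let m ≥ 1 be an integer and let 0 < a < b ≤ c < d. Set B = −2(1+m)/(m a^{m/2}) and D = 2(1+m)/(m c^{m/2}) + (2(1+m)/(m c^{m/2}))·(b/c)^{1+m/2} + B·(b/c)^{1+m}. Define f : [0,∞) → ℝ by f(t) = (2+m)/m + B t^{m/2} for t ∈ (a,b], f(t) = −(2+m)/m + D t^{m/2} for t ∈ (c,d], and f(t) = 0 otherwise. Then Λ_m f(t) = 1 for every t ∈ (a,b) and Λ_m f(t) = −1 for every t ∈ (c,d). -/
import Mathlib


open MeasureTheory Real Set

/-- The operator `Λ_m`. -/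
noncomputable def Lam (m : ℕ) (f : ℝ → ℝ) (t : ℝ) : ℝ :=
  ((1 + (m : ℝ)) / t ^ (1 + (m : ℝ) / 2)) * (∫ s in (0:ℝ)..t, f s * s ^ ((m : ℝ) / 2)) - f t

lemma my_int_congr {u v : ℝ} (h : u ≤ v) {g1 g2 : ℝ → ℝ}
    (he : ∀ s ∈ Set.Ioc u v, g1 s = g2 s) :
    ∫ s in u..v, g1 s = ∫ s in u..v, g2 s := by
  rw [intervalIntegral.integral_of_le h, intervalIntegral.integral_of_le h]
  exact setIntegral_congr_fun measurableSet_Ioc he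

lemma my_int_integrable {u v : ℝ} (h : u ≤ v) {g1 g2 : ℝ → ℝ}
    (he : ∀ s ∈ Set.Ioc u v, g1 s = g2 s)
    (hg2 : IntervalIntegrable g2 volume u v) :
    IntervalIntegrable g1 volume u v := by
  rw [intervalIntegrable_iff_integrableOn_Ioc_of_le h] at *
  exact hg2.congr_fun (fun s hs => (he s hs).symm) measurableSet_Ioc

lemma my_rpow_ii {u v : ℝ} (hu : 0 < u) (hv : 0 < v) (C p : ℝ) :
    IntervalIntegrable (fun s => C * s ^ p) volume u v := by
  apply ContinuousOn.intervalIntegrable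
  apply ContinuousOn.mul continuousOn_const
  apply ContinuousOn.rpow_const continuousOn_id
  intro x hx
  exact Or.inl (ne_of_gt (lt_of_lt_of_le (lt_min hu hv) hx.1))

/-- For the piecewise-defined function `f` built from `0 < a < b ≤ c < d` and the
coefficients `B`, `D`, we have `Λ_m f = 1` on `(a,b)` and `Λ_m f = -1` on `(c,d)`. -/
theorem stmt_2 (m : ℕ) (hm : 1 ≤ m) (a b c d : ℝ)
    (ha : 0 < a) (hab : a < b) (hbc : b ≤ c) (hcd : c < d)
    (B D : ℝ)
    (hB : B = -(2 * (1 + (m : ℝ))) / ((m : ℝ) * a ^ ((m : ℝ) / 2)))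
    (hD : D = 2 * (1 + (m : ℝ)) / ((m : ℝ) * c ^ ((m : ℝ) / 2))
        + (2 * (1 + (m : ℝ)) / ((m : ℝ) * c ^ ((m : ℝ) / 2))) * (b / c) ^ (1 + (m : ℝ) / 2)
        + B * (b / c) ^ (1 + (m : ℝ)))
    (f : ℝ → ℝ)
    (hf : f = fun t =>
      if a < t ∧ t ≤ b then (2 + (m : ℝ)) / (m : ℝ) + B * t ^ ((m : ℝ) / 2)
      else if c < t ∧ t ≤ d then -(2 + (m : ℝ)) / (m : ℝ) + D * t ^ ((m : ℝ) / 2)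
      else 0) :
    (∀ t ∈ Set.Ioo a b, Lam m f t = 1) ∧ (∀ t ∈ Set.Ioo c d, Lam m f t = -1) := by
  have hm0 : (0:ℝ) < m := by exact_mod_cast hm
  have hb0 : 0 < b := ha.trans hab
  have hc0 : 0 < c := hb0.trans_le hbc
  -- pointwise description of the integrand
  have hgA : ∀ s ∈ Set.Ioc (0:ℝ) a, f s * s ^ ((m:ℝ)/2) = 0 := by
    intro s hs
    simp only [hf]
    rw [if_neg (by rintro ⟨h1, _⟩; linarith [hs.2]),
        if_neg (by rintro ⟨h1, _⟩; linarith [hs.2]), zero_mul]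
  have hgAB : ∀ s ∈ Set.Ioc a b, f s * s ^ ((m:ℝ)/2)
      = (2 + (m:ℝ)) / (m:ℝ) * s ^ ((m:ℝ)/2) + B * s ^ ((m:ℝ)) := by
    intro s hs
    have hs0 : 0 < s := ha.trans hs.1
    simp only [hf]
    rw [if_pos ⟨hs.1, hs.2⟩, add_mul, mul_assoc, ← Real.rpow_add hs0, add_halves]
  have hgBC : ∀ s ∈ Set.Ioc b c, f s * s ^ ((m:ℝ)/2) = 0 := by
    intro s hs
    simp only [hf]
    rw [if_neg (by rintro ⟨_, h2⟩; linarith [hs.1]),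
        if_neg (by rintro ⟨h1, _⟩; linarith [hs.2]), zero_mul]
  have hgCD : ∀ s ∈ Set.Ioc c d, f s * s ^ ((m:ℝ)/2)
      = -(2 + (m:ℝ)) / (m:ℝ) * s ^ ((m:ℝ)/2) + D * s ^ ((m:ℝ)) := by
    intro s hs
    have hs0 : 0 < s := hc0.trans hs.1
    simp only [hf]
    rw [if_neg (by rintro ⟨_, h2⟩; linarith [hs.1]), if_pos ⟨hs.1, hs.2⟩,
        add_mul, mul_assoc, ← Real.rpow_add hs0, add_halves]
  -- value of the model integrals
  have Ival : ∀ u v : ℝ, 0 < u → u ≤ v → ∀ C1 C2 : ℝ,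
      (∫ s in u..v, (C1 * s ^ ((m:ℝ)/2) + C2 * s ^ ((m:ℝ))))
        = C1 * ((v ^ ((m:ℝ)/2 + 1) - u ^ ((m:ℝ)/2 + 1)) / ((m:ℝ)/2 + 1))
          + C2 * ((v ^ ((m:ℝ) + 1) - u ^ ((m:ℝ) + 1)) / ((m:ℝ) + 1)) := by
    intro u v hu huv C1 C2
    have hv : 0 < v := hu.trans_le huv
    rw [intervalIntegral.integral_add (my_rpow_ii hu hv _ _) (my_rpow_ii hu hv _ _),
        intervalIntegral.integral_const_mul, intervalIntegral.integral_const_mul,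
        integral_rpow (Or.inl (by linarith)), integral_rpow (Or.inl (by linarith))]
  -- rpow rewriting helpers
  have e1 : ∀ x : ℝ, 0 < x → x ^ (1 + (m:ℝ)/2) = x * x ^ ((m:ℝ)/2) := by
    intro x hx; rw [Real.rpow_add hx, Real.rpow_one]
  have e2 : ∀ x : ℝ, 0 < x → x ^ ((m:ℝ)/2 + 1) = x * x ^ ((m:ℝ)/2) := by
    intro x hx; rw [Real.rpow_add hx, Real.rpow_one, mul_comm]
  have e3 : ∀ x : ℝ, 0 < x → x ^ ((m:ℝ) + 1) = x * x ^ ((m:ℝ)/2) * x ^ ((m:ℝ)/2) := by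
    intro x hx
    rw [show (m:ℝ) + 1 = (m:ℝ)/2 + ((m:ℝ)/2 + 1) by ring, Real.rpow_add hx,
        Real.rpow_add hx, Real.rpow_one]
    ring
  have e4 : ∀ x : ℝ, 0 < x → x ^ (1 + (m:ℝ)) = x * x ^ ((m:ℝ)/2) * x ^ ((m:ℝ)/2) := by
    intro x hx
    rw [show (1:ℝ) + (m:ℝ) = (m:ℝ)/2 + ((m:ℝ)/2 + 1) by ring, Real.rpow_add hx,
        Real.rpow_add hx, Real.rpow_one]
    ring
  have hm' : (m:ℝ) ≠ 0 := ne_of_gt hm0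
  have hm1 : (m:ℝ) + 1 ≠ 0 := by positivity
  have hm2 : (m:ℝ)/2 + 1 ≠ 0 := by positivity
  have hQ : (0:ℝ) < a ^ ((m:ℝ)/2) := Real.rpow_pos_of_pos ha _
  have hR : (0:ℝ) < b ^ ((m:ℝ)/2) := Real.rpow_pos_of_pos hb0 _
  have hS : (0:ℝ) < c ^ ((m:ℝ)/2) := Real.rpow_pos_of_pos hc0 _
  constructor
  · rintro t ⟨hat, htb⟩
    have ht0 : 0 < t := ha.trans hat
    have hP : (0:ℝ) < t ^ ((m:ℝ)/2) := Real.rpow_pos_of_pos ht0 _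
    have hAB' : ∀ s ∈ Set.Ioc a t, f s * s ^ ((m:ℝ)/2)
        = (2 + (m:ℝ)) / (m:ℝ) * s ^ ((m:ℝ)/2) + B * s ^ ((m:ℝ)) :=
      fun s hs => hgAB s ⟨hs.1, hs.2.trans htb.le⟩
    have iA : IntervalIntegrable (fun s => f s * s ^ ((m:ℝ)/2)) volume 0 a :=
      my_int_integrable ha.le hgA intervalIntegrable_const
    have iB : IntervalIntegrable (fun s => f s * s ^ ((m:ℝ)/2)) volume a t :=
      my_int_integrable hat.le hAB' ((my_rpow_ii ha ht0 _ _).add (my_rpow_ii ha ht0 _ _))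
    have key : (∫ s in (0:ℝ)..t, f s * s ^ ((m:ℝ)/2))
        = (2 + (m:ℝ)) / (m:ℝ) * ((t ^ ((m:ℝ)/2 + 1) - a ^ ((m:ℝ)/2 + 1)) / ((m:ℝ)/2 + 1))
          + B * ((t ^ ((m:ℝ) + 1) - a ^ ((m:ℝ) + 1)) / ((m:ℝ) + 1)) := by
      rw [← intervalIntegral.integral_add_adjacent_intervals iA iB,
          my_int_congr ha.le hgA, my_int_congr hat.le hAB', Ival a t ha hat.le]
      simp
    have hft : f t = (2 + (m:ℝ)) / (m:ℝ) + B * t ^ ((m:ℝ)/2) := by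
      simp only [hf]; rw [if_pos ⟨hat, htb.le⟩]
    simp only [Lam, key, hft]
    rw [e1 t ht0, e2 t ht0, e2 a ha, e3 t ht0, e3 a ha, hB]
    field_simp
    ring
  · rintro t ⟨hct, htd⟩
    have ht0 : 0 < t := hc0.trans hct
    have hP : (0:ℝ) < t ^ ((m:ℝ)/2) := Real.rpow_pos_of_pos ht0 _
    have hCD' : ∀ s ∈ Set.Ioc c t, f s * s ^ ((m:ℝ)/2)
        = -(2 + (m:ℝ)) / (m:ℝ) * s ^ ((m:ℝ)/2) + D * s ^ ((m:ℝ)) :=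
      fun s hs => hgCD s ⟨hs.1, hs.2.trans htd.le⟩
    have iA : IntervalIntegrable (fun s => f s * s ^ ((m:ℝ)/2)) volume 0 a :=
      my_int_integrable ha.le hgA intervalIntegrable_const
    have iB : IntervalIntegrable (fun s => f s * s ^ ((m:ℝ)/2)) volume a b :=
      my_int_integrable hab.le hgAB ((my_rpow_ii ha hb0 _ _).add (my_rpow_ii ha hb0 _ _))
    have iC : IntervalIntegrable (fun s => f s * s ^ ((m:ℝ)/2)) volume b c :=
      my_int_integrable hbc hgBC intervalIntegrable_const
    have iD : IntervalIntegrable (fun s => f s * s ^ ((m:ℝ)/2)) volume c t :=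
      my_int_integrable hct.le hCD' ((my_rpow_ii hc0 ht0 _ _).add (my_rpow_ii hc0 ht0 _ _))
    have key : (∫ s in (0:ℝ)..t, f s * s ^ ((m:ℝ)/2))
        = ((2 + (m:ℝ)) / (m:ℝ) * ((b ^ ((m:ℝ)/2 + 1) - a ^ ((m:ℝ)/2 + 1)) / ((m:ℝ)/2 + 1))
            + B * ((b ^ ((m:ℝ) + 1) - a ^ ((m:ℝ) + 1)) / ((m:ℝ) + 1)))
          + (-(2 + (m:ℝ)) / (m:ℝ) * ((t ^ ((m:ℝ)/2 + 1) - c ^ ((m:ℝ)/2 + 1)) / ((m:ℝ)/2 + 1))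
            + D * ((t ^ ((m:ℝ) + 1) - c ^ ((m:ℝ) + 1)) / ((m:ℝ) + 1))) := by
      rw [← intervalIntegral.integral_add_adjacent_intervals ((iA.trans iB).trans iC) iD,
          ← intervalIntegral.integral_add_adjacent_intervals (iA.trans iB) iC,
          ← intervalIntegral.integral_add_adjacent_intervals iA iB,
          my_int_congr ha.le hgA, my_int_congr hab.le hgAB, my_int_congr hbc hgBC,
          my_int_congr hct.le hCD', Ival a b ha hab.le, Ival c t hc0 hct.le]
      simp
    have hft : f t = -(2 + (m:ℝ)) / (m:ℝ) + D * t ^ ((m:ℝ)/2) := by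
      simp only [hf]; rw [if_neg (by rintro ⟨_, h2⟩; linarith), if_pos ⟨hct, htd.le⟩]
    simp only [Lam, key, hft]
    rw [hD, Real.div_rpow hb0.le hc0.le, Real.div_rpow hb0.le hc0.le,
        e1 t ht0, e1 b hb0, e1 c hc0, e2 t ht0, e2 a ha, e2 b hb0, e2 c hc0,
        e3 t ht0, e3 a ha, e3 b hb0, e3 c hc0, e4 b hb0, e4 c hc0, hB]
    field_simp
    ring
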